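/- arXiv:math/0601462 — 5 statements merged into one kernel-verified Lean document; each statement's English description precedes it below -/
import Mathlib

section
/- Let U be a 𝔟-module which is finitely generated as a U(𝔫)-module and all of whose elements are 𝔞-finite. Then U is the direct sum of its generalized weight spaces U_μ, for every k the set S_k = {μ ∈ 𝔞* : U_μ ≠ 0 and U_μ ⊄ 𝔫^kU} is finite, and the linear map φ : ∏_{μ∈𝔞*} U_μ → lim_k U/𝔫^kU, sending (x_μ)_μ to the compatible family whose k-th component is the class of the finite sum Σ_{μ∈S_k} x_μ modulo 𝔫^kU, is a well-defined linear isomorphism. -/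
set_option maxHeartbeats 1000000
set_option synthInstance.maxHeartbeats 400000

namespace Jb

variable (b : Type*) [LieRing b] [LieAlgebra ℂ b] [FiniteDimensional ℂ b]
variable (a n : LieSubalgebra ℂ b)

/-- The `𝔞`-weight space `𝔫_α = {X ∈ 𝔫 : [H,X] = α(H)·X for all H ∈ 𝔞}`,
regarded as a subspace of `𝔟`. -/
def wtSpace (α : Module.Dual ℂ a) : Submodule ℂ b where
  carrier := {X | X ∈ n ∧ ∀ H : a, ⁅(H : b), X⁆ = α H • X}
  zero_mem' := ⟨n.zero_mem, fun H => by simp⟩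
  add_mem' := fun {X Y} hX hY => ⟨n.add_mem hX.1 hY.1, fun H => by
    rw [lie_add, hX.2 H, hY.2 H, smul_add]⟩
  smul_mem' := fun c X hX => ⟨n.smul_mem c hX.1, fun H => by
    rw [lie_smul, hX.2 H, smul_comm]⟩

section ModuleU

variable (U : Type*) [AddCommGroup U] [Module ℂ U]
  [LieRingModule b U] [LieModule ℂ b U]

/-- The subspace `𝔫^k·U` of a `𝔟`-module `U`. -/
def nPowU : ℕ → Submodule ℂ U
  | 0 => ⊤
  | k + 1 => Submodule.span ℂ
      {z | ∃ x ∈ n, ∃ u ∈ nPowU k, z = ⁅x, u⁆}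

lemma nPowU_succ_le : ∀ k, nPowU b n U (k + 1) ≤ nPowU b n U k
  | 0 => le_top
  | k + 1 => Submodule.span_le.2 fun z hz => by
      obtain ⟨x, hx, u, hu, rfl⟩ := hz
      exact Submodule.subset_span ⟨x, hx, u, nPowU_succ_le k hu, rfl⟩

/-- The generalized weight space `U_μ` of the `𝔞`-action on `U`,
for `μ ∈ 𝔞* = Hom_ℂ(𝔞, ℂ)`. -/
def genWt (μ : Module.Dual ℂ a) : Submodule ℂ U :=
  ⨅ H : a, Module.End.maxGenEigenspace (LieModule.toEnd ℂ b U (H : b)) (μ H)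

/-- The set of `𝔞`-finite elements of `U`: the elements lying in some
finite-dimensional `𝔞`-stable subspace. -/
def aFinite : Set U :=
  {u | ∃ N : Submodule ℂ U, u ∈ N ∧ FiniteDimensional ℂ N ∧
    ∀ H : a, ∀ v ∈ N, ⁅(H : b), v⁆ ∈ N}

/-- `U` is finitely generated as a `U(𝔫)`-module: there is a finite subset `S` of `U`
such that the smallest `𝔫`-stable subspace of `U` containing `S` is all of `U`. -/
def FGOverN : Prop :=
  ∃ S : Finset U, ∀ N : Submodule ℂ U, (↑S : Set U) ⊆ N →
    (∀ x ∈ n, ∀ u ∈ N, ⁅x, u⁆ ∈ N) → N = ⊤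

/-- The transition map `U/𝔫^{k+1}U → U/𝔫^kU`. -/
def transU (k : ℕ) : (U ⧸ nPowU b n U (k + 1)) →ₗ[ℂ] U ⧸ nPowU b n U k :=
  Submodule.mapQ _ _ LinearMap.id
    (fun u hu => by simpa using nPowU_succ_le b n U k hu)

/-- `lim_k U/𝔫^kU`: the space of compatible families. -/
def limU : Submodule ℂ (∀ k, U ⧸ nPowU b n U k) where
  carrier := {f | ∀ k, transU b n U k (f (k + 1)) = f k}
  zero_mem' := fun k => map_zero _
  add_mem' := fun {f g} hf hg k => by
    simp only [Pi.add_apply, map_add, hf k, hg k]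
  smul_mem' := fun c f hf k => by
    simp only [Pi.smul_apply, map_smul, hf k]

/-- The set `S_k = {μ : U_μ ≠ 0 and U_μ ⊄ 𝔫^kU}`. -/
def Sk (k : ℕ) : Set (Module.Dual ℂ a) :=
  {μ | genWt b a U μ ≠ ⊥ ∧ ¬ genWt b a U μ ≤ nPowU b n U k}

/-- The canonical map `U → lim_k U/𝔫^kU`. -/
def canU (u : U) : limU b n U :=
  ⟨fun _ => Submodule.Quotient.mk u, fun _ => rfl⟩

end ModuleU

end Jb

/-!
Since `𝔞` is nilpotent and acts locally finitely, every `𝔞`-stable subspace of `U` (in particular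
every `𝔫^kU`) is the sum of its intersections with the generalized weight spaces `U_μ`; these are
independent, so `U = ⨁ U_μ` and each `𝔫^kU` is homogeneous. Finite generation yields finitely many
weights `F` whose weight spaces generate `U` over `𝔫`, and `𝔫_α U_μ ⊆ U_{α+μ}`. Counting steps from
`F` gives `U_μ ⊆ 𝔫^{m+1}U` unless `μ ∈ F + m • ({0} ∪ Φ)`, so each `S_k` is finite. Grading by
`r = Re ⟨·, H₀⟩` instead, with `B ≤ r` on `F` and `δ = min_Φ r > 0`, puts `𝔫^kU` inside the sum
of the `U_ν` with `r ν ≥ B + kδ`, so `U_μ ∩ 𝔫^KU = 0` for large `K`. Hence the components of a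
compatible family of lifts stabilise, which inverts `φ`.
-/

section Decomposition

variable {R M ι : Type*} [Ring R] [AddCommGroup M] [Module R M] [DecidableEq ι]
  {V : ι → Submodule R M} [DirectSum.Decomposition V]

open DirectSum

theorem Submodule.isHomogeneous_of_le_iSup_inf {p : Submodule R M} (hp : p ≤ ⨆ i, p ⊓ V i) :
    p.IsHomogeneous V := by
  intro j m hm
  replace hm := hp hm
  induction hm using Submodule.iSup_induction' with
  | mem i v hv =>
    by_cases hij : i = j
    · subst hij
      rw [decompose_of_mem_same V hv.2]
      exact hv.1
    · rw [decompose_of_mem_ne V hv.2 hij]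
      exact p.zero_mem
  | zero => simp
  | add v w _ _ hv hw => simpa using p.add_mem hv hw

theorem DirectSum.decompose_sum_coe_apply (x : ∀ i, V i) (s : Finset ι) (j : ι) :
    (decompose V (∑ i ∈ s, (x i : M)) j : M) = if j ∈ s then (x j : M) else 0 := by
  by_cases hj : j ∈ s <;> simp [decompose_coe, DirectSum.of_apply, hj]

theorem DirectSum.sub_sum_decompose_mem {p : Submodule R M} {s : Finset ι}
    (hs : ∀ i ∉ s, V i ≤ p) (u : M) : u - ∑ i ∈ s, (decompose V u i : M) ∈ p := by
  induction u using DirectSum.Decomposition.inductionOn V with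
  | zero => simp
  | @homogeneous j v =>
    by_cases hj : j ∈ s
    · rw [Finset.sum_eq_single_of_mem j hj fun i _ hij => decompose_of_mem_ne V v.2 hij.symm,
        decompose_of_mem_same V v.2, sub_self]
      exact p.zero_mem
    · rw [Finset.sum_eq_zero fun i hi =>
        decompose_of_mem_ne V v.2 (ne_of_mem_of_not_mem hi hj).symm, sub_zero]
      exact hs j hj v.2
  | add u w hu hw =>
    convert p.add_mem hu hw using 1
    simp only [decompose_add, DirectSum.add_apply, Submodule.coe_add, Finset.sum_add_distrib]
    abel

end Decomposition

section LocallyFinite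

open LieModule

variable {K L M : Type*} [Field K] [CharZero K] [IsAlgClosed K] [LieRing L] [LieAlgebra K L]
  [LieRing.IsNilpotent L] [AddCommGroup M] [Module K M] [LieRingModule L M] [LieModule K L M]

theorem LieSubmodule.le_iSup_inf_genWeightSpace (N : LieSubmodule K L M) [FiniteDimensional K N] :
    N ≤ ⨆ χ : Weight K L N, N ⊓ genWeightSpace M (χ.toLinear : L → K) := by
  conv_lhs => rw [← N.map_incl_top, ← iSup_genWeightSpace_eq_top' K L N, LieSubmodule.map_iSup]
  refine iSup_mono fun χ ↦ le_inf ?_ (map_genWeightSpace_le _)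
  exact (LieSubmodule.map_mono le_top).trans N.map_incl_top.le

theorem LieSubmodule.le_iSup_inf_genWeightSpace_of_locallyFinite
    (hM : ∀ m : M, ∃ N : LieSubmodule K L M, FiniteDimensional K N ∧ m ∈ N)
    (N : LieSubmodule K L M) : N ≤ ⨆ χ : L →ₗ[K] K, N ⊓ genWeightSpace M χ := by
  intro m hm
  obtain ⟨N', hN', hmN'⟩ := hM m
  have : FiniteDimensional K ↥(N ⊓ N') :=
    Submodule.finiteDimensional_of_le (inf_le_right (a := N.toSubmodule))
  have hle : ⨆ χ : Weight K L ↥(N ⊓ N'), N ⊓ N' ⊓ genWeightSpace M (χ.toLinear : L → K) ≤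
      ⨆ χ : L →ₗ[K] K, N ⊓ genWeightSpace M χ :=
    iSup_mono' fun χ => ⟨χ.toLinear, inf_le_inf_right _ inf_le_left⟩
  exact hle ((N ⊓ N').le_iSup_inf_genWeightSpace ⟨hm, hmN'⟩)

end LocallyFinite

namespace Jb

section Weights

open LieModule Pointwise

variable {b : Type*} [LieRing b] [LieAlgebra ℂ b] {a n : LieSubalgebra ℂ b}
  {U : Type*} [AddCommGroup U] [Module ℂ U] [LieRingModule b U]

theorem exists_lieSubmodule_of_mem_aFinite {u : U} (hu : u ∈ aFinite b a U) :
    ∃ N : LieSubmodule ℂ a U, FiniteDimensional ℂ N ∧ u ∈ N := by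
  obtain ⟨N, huN, hfd, hst⟩ := hu
  exact ⟨{ N with lie_mem := fun {H v} hv => hst H v hv }, hfd, huN⟩

theorem lie_mem_nPowU_succ {x : b} (hx : x ∈ n) {k : ℕ} {u : U} (hu : u ∈ nPowU b n U k) :
    ⁅x, u⁆ ∈ nPowU b n U (k + 1) :=
  Submodule.subset_span ⟨x, hx, u, hu, rfl⟩

variable [LieModule ℂ b U]

theorem lie_mem_nPowU (hideal : ∀ x : b, ∀ y ∈ n, ⁅x, y⁆ ∈ n) (x : b) :
    ∀ {k : ℕ} {u : U}, u ∈ nPowU b n U k → ⁅x, u⁆ ∈ nPowU b n U k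
  | 0, _, _ => trivial
  | k + 1, _, hu => by
    refine Submodule.span_induction ?_ (by simp) (fun _ _ _ _ hv hw => ?_)
      (fun c _ _ hv => ?_) hu
    · rintro _ ⟨y, hy, v, hv, rfl⟩
      rw [leibniz_lie]
      exact add_mem (lie_mem_nPowU_succ (hideal x y hy) hv)
        (lie_mem_nPowU_succ hy (lie_mem_nPowU hideal x hv))
    · rw [lie_add]; exact add_mem hv hw
    · rw [lie_smul]; exact Submodule.smul_mem _ c hv

theorem lie_mem_iSup_of_wtSpace {Φ : Finset (Module.Dual ℂ a)}
    (hwtsup : n.toSubmodule = ⨆ α ∈ Φ, wtSpace b a n α) {C C' : Module.Dual ℂ a → Submodule ℂ U}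
    (hC : ∀ α ∈ Φ, ∀ ν, ∀ x ∈ wtSpace b a n α, ∀ u ∈ C ν, ⁅x, u⁆ ∈ C' (α + ν))
    {x : b} (hx : x ∈ n) {u : U} (hu : u ∈ ⨆ ν, C ν) : ⁅x, u⁆ ∈ ⨆ ν, C' ν := by
  let bracket : b →ₗ[ℂ] U →ₗ[ℂ] U := .mk₂ ℂ (⁅·, ·⁆) add_lie smul_lie lie_add lie_smul
  have : Submodule.map₂ bracket n.toSubmodule (⨆ ν, C ν) ≤ ⨆ ν, C' ν := by
    simp only [hwtsup, Submodule.map₂_iSup_left, Submodule.map₂_iSup_right, iSup_le_iff,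
      Submodule.map₂_le]
    exact fun ν α hα y hy v hv => Submodule.mem_iSup_of_mem (α + ν) (hC α hα ν y hy v hv)
  exact Submodule.map₂_le.1 this x hx u hu

theorem mem_Sk_iff {k : ℕ} {μ : Module.Dual ℂ a} :
    μ ∈ Sk b a n U k ↔ ¬ genWt b a U μ ≤ nPowU b n U k :=
  and_iff_right_of_imp fun h hbot => h (hbot ▸ bot_le)

def IsGeneratedByGenWt (n : LieSubalgebra ℂ b) (U : Type*) [AddCommGroup U] [Module ℂ U]
    [LieRingModule b U] [LieModule ℂ b U] (F : Finset (Module.Dual ℂ a)) : Prop :=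
  ∀ N : Submodule ℂ U, (∀ μ ∈ F, genWt b a U μ ≤ N) → (∀ x ∈ n, ∀ u ∈ N, ⁅x, u⁆ ∈ N) → N = ⊤

variable [LieRing.IsNilpotent a] {Φ F : Finset (Module.Dual ℂ a)}

theorem genWt_eq_genWeightSpace (μ : Module.Dual ℂ a) :
    genWt b a U μ = (genWeightSpace U (μ : a → ℂ) : Submodule ℂ U) := by
  ext u
  simp [genWt, mem_genWeightSpace, Module.End.mem_maxGenEigenspace]

theorem iSupIndep_genWt : iSupIndep (genWt b a U) := by
  simp_rw [funext genWt_eq_genWeightSpace]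
  exact (LieSubmodule.iSupIndep_toSubmodule.2 (iSupIndep_genWeightSpace ℂ a U)).comp
    DFunLike.coe_injective

theorem lie_mem_genWt_add {α μ : Module.Dual ℂ a} {x : b}
    (hx : x ∈ wtSpace b a n α) {u : U} (hu : u ∈ genWt b a U μ) :
    ⁅x, u⁆ ∈ genWt b a U (α + μ) := by
  have hroot : x ∈ LieAlgebra.rootSpace a (α : a → ℂ) :=
    (mem_genWeightSpace _ _ _).2 fun H => ⟨1, by simp [hx.2 H]⟩
  rw [genWt_eq_genWeightSpace] at hu ⊢
  exact LieAlgebra.lie_mem_genWeightSpace_of_mem_genWeightSpace hroot hu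

theorem le_iSup_inf_genWt (hafin : ∀ u : U, u ∈ aFinite b a U) {N : Submodule ℂ U}
    (hN : ∀ H : a, ∀ v ∈ N, ⁅(H : b), v⁆ ∈ N) : N ≤ ⨆ μ, N ⊓ genWt b a U μ := by
  let N' : LieSubmodule ℂ a U := { N with lie_mem := fun {H v} hv => hN H v hv }
  have := N'.le_iSup_inf_genWeightSpace_of_locallyFinite
    fun u => exists_lieSubmodule_of_mem_aFinite (hafin u)
  simpa [← LieSubmodule.toSubmodule_le_toSubmodule, LieSubmodule.iSup_toSubmodule,
    genWt_eq_genWeightSpace] using this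

theorem iSup_genWt_eq_top (hafin : ∀ u : U, u ∈ aFinite b a U) : ⨆ μ, genWt b a U μ = ⊤ :=
  top_unique <| by simpa using le_iSup_inf_genWt (N := ⊤) hafin fun _ _ _ => trivial

theorem isHomogeneous_nPowU [DecidableEq (Module.Dual ℂ a)]
    [DirectSum.Decomposition (genWt b a U)] (hideal : ∀ x : b, ∀ y ∈ n, ⁅x, y⁆ ∈ n)
    (hafin : ∀ u : U, u ∈ aFinite b a U) (k : ℕ) :
    (nPowU b n U k).IsHomogeneous (genWt b a U) :=
  Submodule.isHomogeneous_of_le_iSup_inf <|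
    le_iSup_inf_genWt hafin fun H _ hv => lie_mem_nPowU hideal (H : b) hv

theorem exists_isGeneratedByGenWt (hfg : FGOverN b n U)
    (hafin : ∀ u : U, u ∈ aFinite b a U) : ∃ F, IsGeneratedByGenWt (a := a) n U F := by
  classical
  obtain ⟨S, hS⟩ := hfg
  choose N hNfd hmem using fun u : U => exists_lieSubmodule_of_mem_aFinite (hafin u)
  let W : LieSubmodule ℂ a U := ⨆ s : S, N s
  have : FiniteDimensional ℂ W := by
    have (s : S) : FiniteDimensional ℂ (N s : Submodule ℂ U) := hNfd s
    change FiniteDimensional ℂ (W : Submodule ℂ U)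
    rw [LieSubmodule.iSup_toSubmodule]
    infer_instance
  refine ⟨Finset.univ.image fun χ : Weight ℂ a W => χ.toLinear,
    fun P hP hPn => hS P (fun s hs => ?_) hPn⟩
  have hsW := W.le_iSup_inf_genWeightSpace (LieSubmodule.mem_iSup_of_mem ⟨s, hs⟩ (hmem s))
  rw [← LieSubmodule.mem_toSubmodule, LieSubmodule.iSup_toSubmodule] at hsW
  refine Submodule.iSup_induction _ (motive := (· ∈ P)) hsW (fun χ v hv => ?_) P.zero_mem
    fun _ _ => P.add_mem
  refine hP _ (Finset.mem_image_of_mem _ (Finset.mem_univ χ)) ?_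
  rw [genWt_eq_genWeightSpace]
  exact hv.2

theorem genWt_le_nPowU_succ [DecidableEq (Module.Dual ℂ a)]
    (hwtsup : n.toSubmodule = ⨆ α ∈ Φ, wtSpace b a n α) (hF : IsGeneratedByGenWt n U F)
    {m : ℕ} {μ : Module.Dual ℂ a} (hμ : μ ∉ F + m • insert 0 Φ) :
    genWt b a U μ ≤ nPowU b n U (m + 1) := by
  have hF_sub (m : ℕ) : F ⊆ F + m • insert 0 Φ := fun ν hν => by
    simpa using Finset.add_mem_add hν (Finset.zero_mem_nsmul (Finset.mem_insert_self 0 Φ))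
  have hstep {m : ℕ} {α ν : Module.Dual ℂ a} (hα : α ∈ Φ) (hν : ν ∈ F + m • insert 0 Φ) :
      α + ν ∈ F + (m + 1) • insert 0 Φ := by
    rw [succ_nsmul, ← add_assoc, add_comm α]
    exact Finset.add_mem_add hν (Finset.mem_insert_of_mem hα)
  -- `C ν` cuts `U_ν` down to the depth predicted by its distance from `F`. The sum of the `C ν`
  -- is `𝔫`-stable and contains the generators, so independence forces `C = genWt`.
  let C (ν : Module.Dual ℂ a) : Submodule ℂ U :=
    genWt b a U ν ⊓ ⨅ (m : ℕ) (_ : ν ∉ F + m • insert 0 Φ), nPowU b n U (m + 1)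
  have hC : ⨆ ν, C ν = ⊤ := by
    refine hF _ (fun ν hν => le_iSup_of_le ν (le_inf le_rfl
      (le_iInf₂ fun m hm => absurd (hF_sub m hν) hm))) fun x hx u hu => ?_
    refine lie_mem_iSup_of_wtSpace hwtsup (fun α hα ν y hy v hv => ?_) hx hu
    simp only [C, Submodule.mem_inf, Submodule.mem_iInf] at hv ⊢
    obtain ⟨hv, hvdeep⟩ := hv
    refine ⟨lie_mem_genWt_add hy hv, fun m hm => ?_⟩
    cases m with
    | zero => exact lie_mem_nPowU_succ hy.1 trivial
    | succ m => exact lie_mem_nPowU_succ hy.1 (hvdeep m fun hν => hm (hstep hα hν))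
  have hCeq := (iSupIndep_genWt.le_iff_eq_of_iSup_eq_top hC).1 fun ν => inf_le_left
  rw [← hCeq]
  exact inf_le_right.trans (iInf₂_le m hμ)

theorem lie_mem_iSup_genWt_ge (hwtsup : n.toSubmodule = ⨆ α ∈ Φ, wtSpace b a n α)
    (r : Module.Dual ℂ a →+ ℝ) {δ : ℝ} (hδ : ∀ α ∈ Φ, δ ≤ r α) {t : ℝ} {x : b} (hx : x ∈ n)
    {u : U} (hu : u ∈ ⨆ (ν) (_ : t ≤ r ν), genWt b a U ν) :
    ⁅x, u⁆ ∈ ⨆ (ν) (_ : t + δ ≤ r ν), genWt b a U ν := by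
  refine lie_mem_iSup_of_wtSpace hwtsup (fun α hα ν y hy v hv => ?_) hx hu
  by_cases hν : t ≤ r ν
  · rw [iSup_pos hν] at hv
    rw [iSup_pos (by rw [map_add]; linarith [hδ α hα])]
    exact lie_mem_genWt_add hy hv
  · rw [iSup_neg hν, Submodule.mem_bot] at hv
    simp [hv]

theorem finite_Sk [FiniteDimensional ℂ b] (hwtsup : n.toSubmodule = ⨆ α ∈ Φ, wtSpace b a n α)
    (hF : IsGeneratedByGenWt n U F) (k : ℕ) : (Sk b a n U k).Finite := by
  classical
  refine (F + k • insert 0 Φ).finite_toSet.subset fun μ hμ => ?_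
  by_contra h
  exact hμ.2 ((genWt_le_nPowU_succ hwtsup hF h).trans (nPowU_succ_le b n U k))

theorem exists_iSup_genWt_ge_eq_top (hwtsup : n.toSubmodule = ⨆ α ∈ Φ, wtSpace b a n α)
    (hF : IsGeneratedByGenWt n U F) (r : Module.Dual ℂ a →+ ℝ) {δ : ℝ} (hδ0 : 0 ≤ δ)
    (hδ : ∀ α ∈ Φ, δ ≤ r α) : ∃ B, ⨆ (ν) (_ : B ≤ r ν), genWt b a U ν = ⊤ := by
  obtain ⟨B, hB⟩ := (F.image r).bddBelow
  refine ⟨B, hF _ (fun μ hμ => le_iSup₂_of_le μ (hB (Finset.mem_image_of_mem r hμ)) le_rfl)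
    fun x hx u hu => ?_⟩
  have hmono : ⨆ (ν) (_ : B + δ ≤ r ν), genWt b a U ν ≤ ⨆ (ν) (_ : B ≤ r ν), genWt b a U ν :=
    biSup_mono fun ν h => by linarith
  exact hmono (lie_mem_iSup_genWt_ge hwtsup r hδ hx hu)

theorem nPowU_le_iSup_genWt_ge (hwtsup : n.toSubmodule = ⨆ α ∈ Φ, wtSpace b a n α)
    (r : Module.Dual ℂ a →+ ℝ) {δ : ℝ} (hδ : ∀ α ∈ Φ, δ ≤ r α) {B : ℝ}
    (hB : ⨆ (ν) (_ : B ≤ r ν), genWt b a U ν = ⊤) :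
    ∀ k : ℕ, nPowU b n U k ≤ ⨆ (ν) (_ : B + k * δ ≤ r ν), genWt b a U ν
  | 0 => by simp [hB]
  | k + 1 => Submodule.span_le.2 <| by
    rintro _ ⟨x, hx, u, hu, rfl⟩
    have := lie_mem_iSup_genWt_ge hwtsup r hδ hx (nPowU_le_iSup_genWt_ge hwtsup r hδ hB k hu)
    rwa [Nat.cast_succ, add_one_mul, ← add_assoc]

theorem exists_genWt_inf_nPowU_eq_bot (hwtsup : n.toSubmodule = ⨆ α ∈ Φ, wtSpace b a n α)
    (hF : IsGeneratedByGenWt n U F) (hH₀ : ∃ H : a, ∀ α ∈ Φ, 0 < ((α : Module.Dual ℂ a) H).re)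
    (μ : Module.Dual ℂ a) : ∃ K, genWt b a U μ ⊓ nPowU b n U K = ⊥ := by
  obtain ⟨H₀, hH₀⟩ := hH₀
  let r : Module.Dual ℂ a →+ ℝ :=
    { toFun := fun ν => (ν H₀).re, map_zero' := by simp, map_add' := by simp }
  obtain ⟨δ, hδ0, hδ⟩ : ∃ δ > 0, ∀ α ∈ Φ, δ ≤ r α := by
    rcases Φ.eq_empty_or_nonempty with rfl | hΦ
    · exact ⟨1, one_pos, by simp⟩
    · obtain ⟨α₀, hα₀, hmin⟩ := Φ.exists_min_image r hΦ
      exact ⟨r α₀, hH₀ α₀ hα₀, hmin⟩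
  obtain ⟨B, hB⟩ := exists_iSup_genWt_ge_eq_top hwtsup hF r hδ0.le hδ
  obtain ⟨K, hK⟩ := exists_nat_gt ((r μ - B) / δ)
  have hμ : μ ∉ {ν | B + K * δ ≤ r ν} := by
    rw [div_lt_iff₀ hδ0] at hK
    exact fun h => by linarith [show B + K * δ ≤ r μ from h]
  exact ⟨K, ((iSupIndep_genWt.disjoint_biSup hμ).mono_right
    (nPowU_le_iSup_genWt_ge hwtsup r hδ hB K)).eq_bot⟩

end Weights

section Completion

variable {b : Type*} [LieRing b] [LieAlgebra ℂ b] {n : LieSubalgebra ℂ b}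
  [FiniteDimensional ℂ b] {U : Type*} [AddCommGroup U] [Module ℂ U] [LieRingModule b U]
  [LieModule ℂ b U]

theorem nPowU_antitone : Antitone (nPowU b n U) :=
  antitone_nat_of_succ_le (nPowU_succ_le b n U)

theorem sub_mem_nPowU_of_le {u : ℕ → U} (hu : ∀ k, u (k + 1) - u k ∈ nPowU b n U k) {k l : ℕ}
    (hkl : k ≤ l) : u l - u k ∈ nPowU b n U k := by
  induction l, hkl using Nat.le_induction with
  | base => simp
  | succ l hkl ih =>
    rw [← sub_add_sub_cancel]
    exact add_mem (nPowU_antitone hkl (hu l)) ih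

theorem mk_mem_limU_iff (u : ℕ → U) :
    (fun k => (Submodule.Quotient.mk (u k) : U ⧸ nPowU b n U k)) ∈ limU b n U ↔
      ∀ k, u (k + 1) - u k ∈ nPowU b n U k :=
  forall_congr' fun k => by
    rw [transU, Submodule.mapQ_apply, LinearMap.id_apply, Submodule.Quotient.eq]

variable {ι : Type*} {V : ι → Submodule ℂ U} {s : ℕ → Finset ι}

theorem monotone_of_mem_iff_not_le (hs : ∀ k i, i ∈ s k ↔ ¬ V i ≤ nPowU b n U k) : Monotone s :=
  monotone_nat_of_le_succ fun k i hi =>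
    (hs _ i).2 fun hle => (hs k i).1 hi (hle.trans (nPowU_succ_le b n U k))

noncomputable def truncLim (hs : ∀ k i, i ∈ s k ↔ ¬ V i ≤ nPowU b n U k) :
    (∀ i, V i) →ₗ[ℂ] limU b n U where
  toFun x := ⟨_, (mk_mem_limU_iff fun k => ∑ i ∈ s k, (x i : U)).2 fun k => by
    classical
    rw [← Finset.sum_sdiff_eq_sub (monotone_of_mem_iff_not_le hs k.le_succ)]
    refine sum_mem fun i hi => ?_
    exact not_not.1 (mt (hs k i).2 (Finset.mem_sdiff.1 hi).2) (x i).2⟩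
  map_add' x y := by
    ext k
    simp [Finset.sum_add_distrib]
  map_smul' c x := by
    ext k
    simp [← Finset.smul_sum, Submodule.Quotient.mk_smul]

variable [DecidableEq ι] [DirectSum.Decomposition V]

open DirectSum

theorem truncLim_injective (hs : ∀ k i, i ∈ s k ↔ ¬ V i ≤ nPowU b n U k)
    (hhom : ∀ k, (nPowU b n U k).IsHomogeneous V)
    (hsep : ∀ i, ∃ K, V i ⊓ nPowU b n U K = ⊥) :
    Function.Injective (truncLim hs) := by
  refine (injective_iff_map_eq_zero _).2 fun x hx => funext fun j => ?_
  have hsum (k : ℕ) : ∑ i ∈ s k, (x i : U) ∈ nPowU b n U k :=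
    (Submodule.Quotient.mk_eq_zero _).1 (congr_fun (congrArg Subtype.val hx) k)
  obtain ⟨K, hK⟩ := hsep j
  have hxK : (x j : U) ∈ nPowU b n U K := by
    by_cases hj : j ∈ s K
    · have := hhom K j (hsum K)
      rwa [decompose_sum_coe_apply, if_pos hj] at this
    · exact not_not.1 (mt (hs K j).2 hj) (x j).2
  have : (x j : U) ∈ V j ⊓ nPowU b n U K := ⟨(x j).2, hxK⟩
  rw [hK, Submodule.mem_bot] at this
  exact Subtype.ext this

/-- From the stage `K` on, the `i`-th components of a Cauchy sequence are constant. -/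
theorem decompose_sub_decompose_mem (hhom : ∀ k, (nPowU b n U k).IsHomogeneous V)
    {u : ℕ → U} (hu : ∀ k, u (k + 1) - u k ∈ nPowU b n U k) {i : ι} {K : ℕ}
    (hK : V i ⊓ nPowU b n U K = ⊥) (k : ℕ) :
    (decompose V (u K) i : U) - decompose V (u k) i ∈ nPowU b n U k := by
  rcases le_total k K with hkK | hKk
  · simpa using hhom k i (sub_mem_nPowU_of_le hu hkK)
  · have : (decompose V (u k) i : U) - decompose V (u K) i ∈ V i ⊓ nPowU b n U K :=
      ⟨sub_mem (decompose V _ i).2 (decompose V _ i).2,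
        by simpa using hhom K i (sub_mem_nPowU_of_le hu hKk)⟩
    rw [hK, Submodule.mem_bot, sub_eq_zero] at this
    simp [this]

theorem truncLim_surjective (hs : ∀ k i, i ∈ s k ↔ ¬ V i ≤ nPowU b n U k)
    (hhom : ∀ k, (nPowU b n U k).IsHomogeneous V)
    (hsep : ∀ i, ∃ K, V i ⊓ nPowU b n U K = ⊥) :
    Function.Surjective (truncLim hs) := by
  rintro ⟨f, hf⟩
  choose u hu using fun k => Submodule.Quotient.mk_surjective _ (f k)
  obtain rfl : (fun k => Submodule.Quotient.mk (u k)) = f := funext hu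
  have hcauchy := (mk_mem_limU_iff u).1 hf
  choose K hK using hsep
  refine ⟨fun i => decompose V (u (K i)) i, Subtype.ext <| funext fun k => ?_⟩
  change Submodule.Quotient.mk _ = Submodule.Quotient.mk _
  rw [Submodule.Quotient.eq]
  have htrunc := sub_sum_decompose_mem (fun i hi => not_not.1 (mt (hs k i).2 hi)) (u k)
  convert sub_mem (sum_mem fun i _ => decompose_sub_decompose_mem hhom hcauchy (hK i) k) htrunc
    using 1
  rw [Finset.sum_sub_distrib]
  abel

theorem exists_linearEquiv_limU (hs : ∀ k i, i ∈ s k ↔ ¬ V i ≤ nPowU b n U k)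
    (hhom : ∀ k, (nPowU b n U k).IsHomogeneous V)
    (hsep : ∀ i, ∃ K, V i ⊓ nPowU b n U K = ⊥) :
    ∃ φ : (∀ i, V i) ≃ₗ[ℂ] limU b n U, ∀ (x : ∀ i, V i) (k : ℕ),
      ((φ x : limU b n U) : ∀ j, U ⧸ nPowU b n U j) k
        = Submodule.Quotient.mk (∑ i ∈ s k, (x i : U)) :=
  ⟨.ofBijective (truncLim hs) ⟨truncLim_injective hs hhom hsep, truncLim_surjective hs hhom hsep⟩,
    fun _ _ => rfl⟩

end Completion

end Jb

open Jb in
theorem weight_decomposition_and_completion_general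
    (b : Type*) [LieRing b] [LieAlgebra ℂ b] [FiniteDimensional ℂ b]
    (a n : LieSubalgebra ℂ b)
    (hab : IsLieAbelian a)
    (hideal : ∀ x : b, ∀ y ∈ n, ⁅x, y⁆ ∈ n)
    (Φ : Finset (Module.Dual ℂ a))
    (hwtsup : n.toSubmodule = ⨆ α ∈ Φ, wtSpace b a n α)
    (hH₀ : ∃ H : a, ∀ α ∈ Φ, 0 < ((α : Module.Dual ℂ a) H).re)
    (U : Type*) [AddCommGroup U] [Module ℂ U]
    [LieRingModule b U] [LieModule ℂ b U]
    (hfg : FGOverN b n U)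
    (hafin : ∀ u : U, u ∈ aFinite b a U) :
    (iSupIndep fun μ : Module.Dual ℂ a => genWt b a U μ) ∧
    (⨆ μ : Module.Dual ℂ a, genWt b a U μ) = ⊤ ∧
    (∀ k, (Sk b a n U k).Finite) ∧
    ∀ hfin : ∀ k, (Sk b a n U k).Finite,
      ∃ φ : (∀ μ : Module.Dual ℂ a, genWt b a U μ) ≃ₗ[ℂ] limU b n U,
        ∀ (x : ∀ μ : Module.Dual ℂ a, genWt b a U μ) (k : ℕ),
          ((φ x : limU b n U) : ∀ j, U ⧸ nPowU b n U j) k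
            = Submodule.Quotient.mk (∑ μ ∈ (hfin k).toFinset, (x μ : U)) := by
  classical
  have := hab
  obtain ⟨F, hF⟩ := exists_isGeneratedByGenWt hfg hafin
  have hindep : iSupIndep (genWt b a U) := iSupIndep_genWt
  have htop := iSup_genWt_eq_top hafin
  refine ⟨hindep, htop, finite_Sk hwtsup hF, fun hfin => ?_⟩
  let _ :=
    (DirectSum.isInternal_submodule_of_iSupIndep_of_iSup_eq_top hindep htop).chooseDecomposition
  exact exists_linearEquiv_limU (fun k μ => (hfin k).mem_toFinset.trans mem_Sk_iff)
    (isHomogeneous_nPowU hideal hafin) (exists_genWt_inf_nPowU_eq_bot hwtsup hF hH₀)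

open Jb in
/-- Let `𝔟 = 𝔞 ⊕ 𝔫` be as in the paper and let `U` be a `𝔟`-module,
finitely generated over `U(𝔫)`, all of whose elements are `𝔞`-finite.  Then `U` is the
direct sum of its generalized weight spaces `U_μ`, each set
`S_k = {μ : U_μ ≠ 0, U_μ ⊄ 𝔫^kU}` is finite, and the linear map
`φ : ∏_μ U_μ → lim_k U/𝔫^kU`, `(x_μ)_μ ↦ ((Σ_{μ ∈ S_k} x_μ) mod 𝔫^kU)_k`,
is a well-defined linear isomorphism. -/
theorem weight_decomposition_and_completion
    (b : Type*) [LieRing b] [LieAlgebra ℂ b] [FiniteDimensional ℂ b]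
    (a n : LieSubalgebra ℂ b)
    (hab : IsLieAbelian a)
    (hideal : ∀ x : b, ∀ y ∈ n, ⁅x, y⁆ ∈ n)
    (hnilp : LieRing.IsNilpotent n)
    (hdisj : a.toSubmodule ⊓ n.toSubmodule = ⊥)
    (hsup : a.toSubmodule ⊔ n.toSubmodule = ⊤)
    (Φ : Finset (Module.Dual ℂ a)) (hΦ0 : (0 : Module.Dual ℂ a) ∉ Φ)
    (hwtsup : n.toSubmodule = ⨆ α ∈ Φ, wtSpace b a n α)
    (hwtindep : iSupIndep fun α : Φ => wtSpace b a n α)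
    (hH₀ : ∃ H : a, ∀ α ∈ Φ, 0 < ((α : Module.Dual ℂ a) H).re)
    (U : Type*) [AddCommGroup U] [Module ℂ U]
    [LieRingModule b U] [LieModule ℂ b U]
    (hfg : FGOverN b n U)
    (hafin : ∀ u : U, u ∈ aFinite b a U) :
    (iSupIndep fun μ : Module.Dual ℂ a => genWt b a U μ) ∧
    (⨆ μ : Module.Dual ℂ a, genWt b a U μ) = ⊤ ∧
    (∀ k, (Sk b a n U k).Finite) ∧
    ∀ hfin : ∀ k, (Sk b a n U k).Finite,
      ∃ φ : (∀ μ : Module.Dual ℂ a, genWt b a U μ) ≃ₗ[ℂ] limU b n U,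
        ∀ (x : ∀ μ : Module.Dual ℂ a, genWt b a U μ) (k : ℕ),
          ((φ x : limU b n U) : ∀ j, U ⧸ nPowU b n U j) k
            = Submodule.Quotient.mk (∑ μ ∈ (hfin k).toFinset, (x μ : U)) :=
  weight_decomposition_and_completion_general b a n hab hideal Φ hwtsup hH₀ U hfg hafin
end

section
/- Let U be a 𝔟-module which is finitely generated as a U(𝔫)-module and all of whose elements are 𝔞-finite. Then for every μ ∈ 𝔞* there exists a positive integer k such that 𝔫^kU ∩ U_μ = 0. -/
set_option maxHeartbeats 1000000
set_option synthInstance.maxHeartbeats 400000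

/-!
Fix `H₀ ∈ 𝔞` with `Re α(H₀) ≥ c > 0` for all roots `α`, and filter `U` by the spans `E_r` of the
generalized `H₀`-eigenspaces with eigenvalue of real part `≥ r`. Since `[𝔫_α, U_χ] ⊆ U_{α+χ}`,
bracketing with `𝔫` maps `E_r` into `E_{r+c}`. The finitely many `U(𝔫)`-generators are `H₀`-finite,
so they lie in some `E_r`, which is then `𝔫`-stable and hence all of `U`; therefore
`𝔫^kU ⊆ E_{r+kc}`. For `r + kc > Re μ(H₀)` this is independent of the generalized
`μ(H₀)`-eigenspace of `H₀`, which contains `U_μ`.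
-/

open Filter Topology

namespace Module.End

variable {K M : Type*} [Field K] [AddCommGroup M] [Module K M]

lemma mem_iSup_maxGenEigenspace_of_mem [IsAlgClosed K] {f : End K M} {W : Submodule K M}
    [FiniteDimensional K W] (hW : ∀ x ∈ W, f x ∈ W) {u : M} (hu : u ∈ W) :
    u ∈ ⨆ χ, f.maxGenEigenspace χ := by
  have hu' : (⟨u, hu⟩ : W) ∈ ⨆ χ, maxGenEigenspace (f.restrict hW) χ := by
    rw [iSup_maxGenEigenspace_eq_top]
    trivial
  have hmap := Submodule.mem_map_of_mem (f := W.subtype) hu'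
  rw [Submodule.map_iSup] at hmap
  refine (iSup_mono fun χ => ?_ : _ ≤ ⨆ χ, f.maxGenEigenspace χ) hmap
  rw [maxGenEigenspace, genEigenspace_restrict]
  exact Submodule.map_comap_le _ _

variable {M : Type*} [AddCommGroup M] [Module ℂ M] (f : End ℂ M)

def reFiltration (r : ℝ) : Submodule ℂ M :=
  ⨆ (χ : ℂ) (_ : r ≤ χ.re), f.maxGenEigenspace χ

variable {f}

lemma maxGenEigenspace_le_reFiltration {r : ℝ} {χ : ℂ} (h : r ≤ χ.re) :
    f.maxGenEigenspace χ ≤ f.reFiltration r :=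
  le_iSup₂ (f := fun (χ : ℂ) (_ : r ≤ χ.re) => f.maxGenEigenspace χ) χ h

lemma reFiltration_antitone : Antitone f.reFiltration := fun _ _ h =>
  iSup₂_le fun _ hχ => maxGenEigenspace_le_reFiltration (h.trans hχ)

lemma disjoint_reFiltration_maxGenEigenspace {r : ℝ} {μ : ℂ} (h : μ.re < r) :
    Disjoint (f.reFiltration r) (f.maxGenEigenspace μ) := by
  refine ((f.independent_maxGenEigenspace μ).mono_right ?_).symm
  refine iSup₂_le fun χ hχ => ?_
  exact le_iSup₂ (f := fun (χ : ℂ) (_ : χ ≠ μ) => f.maxGenEigenspace χ) χ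
    (by rintro rfl; linarith)

lemma eventually_mem_reFiltration {u : M} (hu : u ∈ ⨆ χ, f.maxGenEigenspace χ) :
    ∀ᶠ r in atBot, u ∈ f.reFiltration r := by
  obtain ⟨s, hs⟩ := Submodule.mem_iSup_iff_exists_finset.1 hu
  filter_upwards [(eventually_all_finset s).2 fun χ _ => eventually_le_atBot χ.re] with r hr
  exact iSup₂_le (fun χ hχ => maxGenEigenspace_le_reFiltration (hr χ hχ)) hs

end Module.End

namespace LieModule

variable {L M : Type*} [LieRing L] [LieAlgebra ℂ L] [AddCommGroup M] [Module ℂ M]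
  [LieRingModule L M] [LieModule ℂ L M]

lemma lie_mem_reFiltration_toEnd {H y : L} {α : ℂ} (hy : ⁅H, y⁆ = α • y) {r : ℝ} {v : M}
    (hv : v ∈ (toEnd ℂ L M H).reFiltration r) :
    ⁅y, v⁆ ∈ (toEnd ℂ L M H).reFiltration (r + α.re) := by
  have hyα : y ∈ (toEnd ℂ L L H).maxGenEigenspace α :=
    (Module.End.mem_maxGenEigenspace _ _ _).2 ⟨1, by simp [hy]⟩
  suffices (toEnd ℂ L M H).reFiltration r ≤
      ((toEnd ℂ L M H).reFiltration (r + α.re)).comap (toEnd ℂ L M y) from this hv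
  refine iSup₂_le fun χ hχ w hw => ?_
  refine Module.End.maxGenEigenspace_le_reFiltration ?_ (lie_mem_maxGenEigenspace_toEnd hyα hw)
  rw [Complex.add_re]
  linarith

end LieModule

namespace Jb

open Module.End LieModule

variable {b : Type*} [LieRing b] [LieAlgebra ℂ b] {a n : LieSubalgebra ℂ b}
  {U : Type*} [AddCommGroup U] [Module ℂ U] [LieRingModule b U]

lemma mem_iSup_maxGenEigenspace_of_mem_aFinite [LieModule ℂ b U] {u : U}
    (hu : u ∈ aFinite b a U) (H : a) :
    u ∈ ⨆ χ, (toEnd ℂ b U H).maxGenEigenspace χ := by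
  obtain ⟨N, huN, hN, hstab⟩ := hu
  exact mem_iSup_maxGenEigenspace_of_mem (hstab H) huN

lemma lie_mem_reFiltration_of_mem [LieModule ℂ b U] {Φ : Finset (Module.Dual ℂ a)}
    (hwtsup : n.toSubmodule = ⨆ α ∈ Φ, wtSpace b a n α) {H : a} {c : ℝ}
    (hc : ∀ α ∈ Φ, c ≤ (α H).re) {r : ℝ} {v : U} (hv : v ∈ (toEnd ℂ b U H).reFiltration r)
    {x : b} (hx : x ∈ n) : ⁅x, v⁆ ∈ (toEnd ℂ b U H).reFiltration (r + c) := by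
  suffices n.toSubmodule ≤ ((toEnd ℂ b U H).reFiltration (r + c)).comap
      ((toEnd ℂ b U : b →ₗ[ℂ] Module.End ℂ U).flip v) from this hx
  rw [hwtsup]
  refine iSup₂_le fun α hα y hy => ?_
  have hyv := lie_mem_reFiltration_toEnd (hy.2 H) hv
  exact reFiltration_antitone (by linarith [hc α hα]) hyv

lemma nPowU_le_of_lie_mem {F : ℕ → Submodule ℂ U} (h0 : F 0 = ⊤)
    (hF : ∀ k, ∀ x ∈ n, ∀ v ∈ F k, ⁅x, v⁆ ∈ F (k + 1)) : ∀ k, nPowU b n U k ≤ F k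
  | 0 => h0.ge
  | k + 1 => Submodule.span_le.2 fun _ ⟨x, hx, v, hv, hz⟩ =>
      hz ▸ hF k x hx v (nPowU_le_of_lie_mem h0 hF k hv)

lemma FGOverN.exists_eq_top {ι : Type*} {l : Filter ι} [l.NeBot] {E : ι → Submodule ℂ U}
    (hfg : FGOverN b n U) (hmem : ∀ u, ∀ᶠ i in l, u ∈ E i)
    (hstab : ∀ i, ∀ x ∈ n, ∀ v ∈ E i, ⁅x, v⁆ ∈ E i) : ∃ i, E i = ⊤ := by
  obtain ⟨S, hS⟩ := hfg
  obtain ⟨i, hi⟩ := ((eventually_all_finset S).2 fun s _ => hmem s).exists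
  exact ⟨i, hS (E i) hi (hstab i)⟩

end Jb

open Jb in
theorem nPow_inter_genWt_eq_bot_general
    (b : Type*) [LieRing b] [LieAlgebra ℂ b]
    (a n : LieSubalgebra ℂ b)
    (Φ : Finset (Module.Dual ℂ a))
    (hwtsup : n.toSubmodule = ⨆ α ∈ Φ, wtSpace b a n α)
    (hH₀ : ∃ H : a, ∀ α ∈ Φ, 0 < ((α : Module.Dual ℂ a) H).re)
    (U : Type*) [AddCommGroup U] [Module ℂ U]
    [LieRingModule b U] [LieModule ℂ b U]
    (hfg : FGOverN b n U)
    (hafin : ∀ u : U, u ∈ aFinite b a U) :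
    ∀ μ : Module.Dual ℂ a, ∃ k : ℕ, 0 < k ∧
      nPowU b n U k ⊓ genWt b a U μ = ⊥ := by
  intro μ
  obtain ⟨H, hH⟩ := hH₀
  set E := (LieModule.toEnd ℂ b U H).reFiltration
  have hsmall : ∀ᶠ c in 𝓝[>] (0 : ℝ), ∀ α ∈ Φ, c ≤ (α H).re :=
    (eventually_all_finset Φ).2 fun α hα =>
      eventually_nhdsWithin_of_eventually_nhds (eventually_le_nhds (hH α hα))
  obtain ⟨c, hc, hc0⟩ := (hsmall.and self_mem_nhdsWithin).exists
  have hlie : ∀ r, ∀ x ∈ n, ∀ v ∈ E r, ⁅x, v⁆ ∈ E (r + c) := fun r x hx v hv =>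
    lie_mem_reFiltration_of_mem hwtsup hc hv hx
  obtain ⟨r, hr⟩ := hfg.exists_eq_top
    (fun u => Module.End.eventually_mem_reFiltration
      (mem_iSup_maxGenEigenspace_of_mem_aFinite (hafin u) H))
    (fun r x hx v hv => Module.End.reFiltration_antitone (by linarith) (hlie r x hx v hv))
  have hpow : ∀ k : ℕ, nPowU b n U k ≤ E (r + k * c) :=
    nPowU_le_of_lie_mem (by simpa using hr) fun k x hx v hv => by
      simpa [add_mul, add_assoc] using hlie _ x hx v hv
  obtain ⟨k, hk⟩ := exists_nat_gt (((μ H).re - r) / c)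
  rw [div_lt_iff₀ hc0] at hk
  have hgap : (μ H).re < r + ((k + 1 : ℕ) : ℝ) * c := by push_cast; linarith
  exact ⟨k + 1, k.succ_pos, disjoint_iff.1 <|
    (Module.End.disjoint_reFiltration_maxGenEigenspace hgap).mono (hpow _) (iInf_le _ H)⟩

open Jb in
/-- Let `𝔟 = 𝔞 ⊕ 𝔫` be as in the paper and let `U` be a `𝔟`-module,
finitely generated over `U(𝔫)`, all of whose elements are `𝔞`-finite.  Then for every
`μ ∈ 𝔞*` there is a positive integer `k` with `𝔫^kU ∩ U_μ = 0`. -/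
theorem nPow_inter_genWt_eq_bot
    (b : Type*) [LieRing b] [LieAlgebra ℂ b] [FiniteDimensional ℂ b]
    (a n : LieSubalgebra ℂ b)
    (hab : IsLieAbelian a)
    (hideal : ∀ x : b, ∀ y ∈ n, ⁅x, y⁆ ∈ n)
    (hnilp : LieRing.IsNilpotent n)
    (hdisj : a.toSubmodule ⊓ n.toSubmodule = ⊥)
    (hsup : a.toSubmodule ⊔ n.toSubmodule = ⊤)
    (Φ : Finset (Module.Dual ℂ a)) (hΦ0 : (0 : Module.Dual ℂ a) ∉ Φ)
    (hwtsup : n.toSubmodule = ⨆ α ∈ Φ, wtSpace b a n α)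
    (hwtindep : iSupIndep fun α : Φ => wtSpace b a n α)
    (hH₀ : ∃ H : a, ∀ α ∈ Φ, 0 < ((α : Module.Dual ℂ a) H).re)
    (U : Type*) [AddCommGroup U] [Module ℂ U]
    [LieRingModule b U] [LieModule ℂ b U]
    (hfg : FGOverN b n U)
    (hafin : ∀ u : U, u ∈ aFinite b a U) :
    ∀ μ : Module.Dual ℂ a, ∃ k : ℕ, 0 < k ∧
      nPowU b n U k ⊓ genWt b a U μ = ⊥ :=
  nPow_inter_genWt_eq_bot_general b a n Φ hwtsup hH₀ U hfg hafin
end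

section
/- Let U be a 𝔟-module which is finitely generated as a U(𝔫)-module and all of whose elements are 𝔞-finite. Then the canonical map U → lim_k U/𝔫^kU is injective, and its image is exactly the set of 𝔞-finite elements of lim_k U/𝔫^kU (each 𝔫^kU is 𝔞-stable, so the inverse limit carries a natural 𝔞-action); that is, the Jacquet module J(U), defined as the 𝔞-finite part of the completion lim_k U/𝔫^kU, equals U. -/
set_option maxHeartbeats 1000000
set_option synthInstance.maxHeartbeats 400000

namespace Jb

variable (b : Type*) [LieRing b] [LieAlgebra ℂ b] [FiniteDimensional ℂ b]
variable (a n : LieSubalgebra ℂ b)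

section Action

variable (U : Type*) [AddCommGroup U] [Module ℂ U]
  [LieRingModule b U] [LieModule ℂ b U]

lemma nPowU_lie_stable (hideal : ∀ x : b, ∀ y ∈ n, ⁅x, y⁆ ∈ n) (k : ℕ) :
    ∀ (x : b) {u : U}, u ∈ nPowU b n U k → ⁅x, u⁆ ∈ nPowU b n U k := by
  induction k with
  | zero => intro x u _; exact Submodule.mem_top
  | succ k ih =>
    intro x u hu
    induction hu using Submodule.span_induction with
    | mem z hz =>
      obtain ⟨y, hy, v, hv, rfl⟩ := hz
      have h1 : ⁅⁅x, y⁆, v⁆ ∈ nPowU b n U (k + 1) :=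
        Submodule.subset_span ⟨_, hideal x y hy, v, hv, rfl⟩
      have h2 : ⁅y, ⁅x, v⁆⁆ ∈ nPowU b n U (k + 1) :=
        Submodule.subset_span ⟨y, hy, _, ih x hv, rfl⟩
      have h3 : ⁅x, ⁅y, v⁆⁆ = ⁅⁅x, y⁆, v⁆ + ⁅y, ⁅x, v⁆⁆ := by
        rw [leibniz_lie]
      rw [h3]
      exact Submodule.add_mem _ h1 h2
    | zero => rw [lie_zero]; exact Submodule.zero_mem _
    | add u v _ _ hu hv => rw [lie_add]; exact Submodule.add_mem _ hu hv
    | smul c u _ hu => rw [lie_smul]; exact Submodule.smul_mem _ _ hu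

/-- The endomorphism of `U/𝔫^kU` induced by the action of `x ∈ 𝔟` on `U`
(each `𝔫^kU` is stable since `𝔫` is an ideal). -/
def actQk (hideal : ∀ x : b, ∀ y ∈ n, ⁅x, y⁆ ∈ n) (x : b) (k : ℕ) :
    (U ⧸ nPowU b n U k) →ₗ[ℂ] U ⧸ nPowU b n U k :=
  Submodule.mapQ _ _ (LieModule.toEnd ℂ b U x)
    (fun u hu => by simpa using nPowU_lie_stable b n U hideal k x hu)

lemma actQk_trans (hideal : ∀ x : b, ∀ y ∈ n, ⁅x, y⁆ ∈ n) (x : b) (k : ℕ)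
    (y : U ⧸ nPowU b n U (k + 1)) :
    transU b n U k (actQk b n U hideal x (k + 1) y)
      = actQk b n U hideal x k (transU b n U k y) := by
  obtain ⟨u, rfl⟩ := Submodule.Quotient.mk_surjective _ y
  simp [transU, actQk, Submodule.mapQ_apply]

/-- The natural action of `H ∈ 𝔞` on `lim_k U/𝔫^kU`. -/
def actLim (hideal : ∀ x : b, ∀ y ∈ n, ⁅x, y⁆ ∈ n) (H : a) :
    limU b n U →ₗ[ℂ] limU b n U where
  toFun f := ⟨fun k => actQk b n U hideal (H : b) k (f.val k), fun k => by
    rw [actQk_trans b n U hideal (H : b) k, f.2 k]⟩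
  map_add' f g := Subtype.ext (funext fun k => by
    simp only [Submodule.coe_add, Pi.add_apply, map_add])
  map_smul' c f := Subtype.ext (funext fun k => by
    simp only [SetLike.val_smul, Pi.smul_apply, map_smul, RingHom.id_apply])

end Action

end Jb

/-!
Since `𝔞` is abelian and acts locally finitely, `U` is the direct sum of its generalized weight
spaces `U_χ`, and the `χ`-part of each quotient `U/𝔫^kU` is the image of `U_χ`. Bracketing with
`𝔫_α` shifts weights by `α`, and `Re α(H₀) ≥ c > 0` on `Φ`. As `U` is generated over `𝔫` by
finitely many vectors, all its weights satisfy `Re χ(H₀) ≥ m` for some `m`, and `𝔫^kU` lies in the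
sum of the weight spaces with `Re χ(H₀) ≥ m + kc`. Hence a finite sum of weight spaces meets `𝔫^kU`
trivially for large `k`. This gives injectivity, and it makes the lifts `u_k ∈ U_χ` of the
components of a weight-`χ` vector of the limit eventually constant, so every generalized weight
vector of the limit, hence every `𝔞`-finite element, comes from `U`.
-/

open Filter Function

namespace Module.End

variable {ι K V W : Type*} [Field K] [AddCommGroup V] [Module K V] [AddCommGroup W] [Module K W]

def jointGenEigenspace (f : ι → End K V) (χ : ι → K) : Submodule K V :=
  ⨅ i, (f i).maxGenEigenspace (χ i)

lemma map_jointGenEigenspace_le_add {f : ι → End K V} {g : ι → End K W} {ψ : V →ₗ[K] W}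
    {d : ι → K} (h : ∀ i, (g i).comp ψ = ψ.comp (f i) + d i • ψ) (χ : ι → K) :
    (jointGenEigenspace f χ).map ψ ≤ jointGenEigenspace g (χ + d) := by
  refine Submodule.map_le_iff_le_comap.2 fun v hv ↦ ?_
  rw [Submodule.mem_comap, jointGenEigenspace, mem_iInf_maxGenEigenspace_iff] at *
  intro i
  obtain ⟨k, hk⟩ := hv i
  have hshift : (g i - (χ + d) i • 1).comp ψ = ψ.comp (f i - χ i • 1) := by
    ext w
    have hw := LinearMap.congr_fun (h i) w
    simp only [LinearMap.comp_apply, LinearMap.add_apply, LinearMap.smul_apply] at hw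
    simp [hw, add_smul]
  exact ⟨k, by rw [← LinearMap.comp_apply, commute_pow_left_of_commute hshift,
    LinearMap.comp_apply, hk, map_zero]⟩

lemma map_jointGenEigenspace_le {f : ι → End K V} {g : ι → End K W} {ψ : V →ₗ[K] W}
    (h : ∀ i, (g i).comp ψ = ψ.comp (f i)) (χ : ι → K) :
    (jointGenEigenspace f χ).map ψ ≤ jointGenEigenspace g χ := by
  simpa using map_jointGenEigenspace_le_add (d := 0) (by simpa using h) χ

lemma iSupIndep_jointGenEigenspace {f : ι → End K V} (hf : ∀ i j, Commute (f i) (f j)) :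
    iSupIndep (jointGenEigenspace f) :=
  independent_iInf_maxGenEigenspace_of_forall_mapsTo f fun i j _ ↦
    mapsTo_maxGenEigenspace_of_comm (hf j i) _

lemma mem_iSup_jointGenEigenspace [IsAlgClosed K] {f : ι → End K V}
    (hf : ∀ i j, Commute (f i) (f j)) {N : Submodule K V} [FiniteDimensional K N]
    (hN : ∀ i, Set.MapsTo (f i) N N) {v : V} (hv : v ∈ N) :
    v ∈ ⨆ χ, jointGenEigenspace f χ := by
  have htop : ⨆ χ, jointGenEigenspace (fun i ↦ (f i).restrict (hN i)) χ = ⊤ :=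
    iSup_iInf_maxGenEigenspace_eq_top_of_iSup_maxGenEigenspace_eq_top_of_commute _
      (fun i j _ ↦ LinearMap.restrict_commute (hf i j) _ _) fun _ ↦ iSup_maxGenEigenspace_eq_top _
  have hle : (⨆ χ, jointGenEigenspace (fun i ↦ (f i).restrict (hN i)) χ).map N.subtype ≤
      ⨆ χ, jointGenEigenspace f χ := by
    rw [Submodule.map_iSup]
    exact iSup_mono fun χ ↦ map_jointGenEigenspace_le (g := f) (ψ := N.subtype)
      (fun i ↦ LinearMap.ext fun _ ↦ rfl) χ
  exact hle ⟨⟨v, hv⟩, htop ▸ Submodule.mem_top, rfl⟩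

lemma commute_of_comp_eq_of_surjective {f : ι → End K V} {g : ι → End K W} {ψ : V →ₗ[K] W}
    (hψ : Surjective ψ) (h : ∀ i, (g i).comp ψ = ψ.comp (f i)) {i j : ι}
    (hf : Commute (f i) (f j)) : Commute (g i) (g j) := by
  refine LinearMap.ext fun w ↦ ?_
  obtain ⟨v, rfl⟩ := hψ w
  have hψ' (l : ι) (v : V) : g l (ψ v) = ψ (f l v) := LinearMap.congr_fun (h l) v
  change g i (g j (ψ v)) = g j (g i (ψ v))
  rw [hψ', hψ', hψ', hψ', ← mul_apply, hf.eq, mul_apply]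

lemma map_jointGenEigenspace_eq_of_surjective {f : ι → End K V} {g : ι → End K W}
    {ψ : V →ₗ[K] W} (hψ : Surjective ψ) (h : ∀ i, (g i).comp ψ = ψ.comp (f i))
    (hf : ∀ i j, Commute (f i) (f j)) (htop : ⨆ χ, jointGenEigenspace f χ = ⊤) (χ : ι → K) :
    (jointGenEigenspace f χ).map ψ = jointGenEigenspace g χ := by
  have hg : ∀ i j, Commute (g i) (g j) := fun i j ↦ commute_of_comp_eq_of_surjective hψ h (hf i j)
  have hsup : ⨆ χ, (jointGenEigenspace f χ).map ψ = ⊤ := by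
    rw [← Submodule.map_iSup, htop, Submodule.map_top, LinearMap.range_eq_top.2 hψ]
  exact congr_fun (((iSupIndep_jointGenEigenspace hg).le_iff_eq_of_iSup_eq_top hsup).1
    fun χ ↦ map_jointGenEigenspace_le h χ) χ

end Module.End

open Module.End

namespace Jb

variable {b : Type*} [LieRing b] [LieAlgebra ℂ b] {a n : LieSubalgebra ℂ b}
  {U : Type*} [AddCommGroup U] [Module ℂ U] [LieRingModule b U] [LieModule ℂ b U]

variable (a U) in
abbrev aAction (H : a) : Module.End ℂ U := LieModule.toEnd ℂ b U H

variable (U) in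
noncomputable def weightSpacesAbove (H₀ : a) (t : ℝ) : Submodule ℂ U :=
  ⨆ χ ∈ {χ : a → ℂ | t ≤ (χ H₀).re}, jointGenEigenspace (aAction a U) χ

lemma aAction_commute (hab : IsLieAbelian a) (H H' : a) :
    Commute (aAction a U H) (aAction a U H') := LinearMap.ext fun v ↦ by
  change ⁅(H : b), ⁅(H' : b), v⁆⁆ = ⁅(H' : b), ⁅(H : b), v⁆⁆
  rw [leibniz_lie, ← LieSubalgebra.coe_bracket, trivial_lie_zero a a H H',
    ZeroMemClass.coe_zero, zero_lie, zero_add]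

lemma jointGenEigenspace_le_weightSpacesAbove {H₀ : a} {t : ℝ} {χ : a → ℂ} (h : t ≤ (χ H₀).re) :
    jointGenEigenspace (aAction a U) χ ≤ weightSpacesAbove U H₀ t :=
  le_iSup₂_of_le χ h le_rfl

lemma disjoint_weightSpacesAbove (hab : IsLieAbelian a) {H₀ : a} {t : ℝ} {s : Finset (a → ℂ)}
    (hs : ∀ χ ∈ s, (χ H₀).re < t) :
    Disjoint (⨆ χ ∈ s, jointGenEigenspace (aAction a U) χ) (weightSpacesAbove U H₀ t) :=
  (iSupIndep_jointGenEigenspace (aAction_commute hab)).disjoint_biSup_biSup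
    (s := (s : Set (a → ℂ))) (t := {χ | t ≤ (χ H₀).re})
    (Set.disjoint_left.2 fun χ hχ h ↦ (hs χ hχ).not_ge h)

lemma map_lie_jointGenEigenspace_le {α : Module.Dual ℂ a} {x : b} (hx : x ∈ wtSpace b a n α)
    (χ : a → ℂ) :
    (jointGenEigenspace (aAction a U) χ).map (LieModule.toEnd ℂ b U x) ≤
      jointGenEigenspace (aAction a U) (χ + α) :=
  map_jointGenEigenspace_le_add (fun H ↦ LinearMap.ext fun v ↦ by
    change ⁅(H : b), ⁅x, v⁆⁆ = ⁅x, ⁅(H : b), v⁆⁆ + α H • ⁅x, v⁆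
    rw [leibniz_lie, hx.2 H, smul_lie, add_comm]) χ

lemma lie_mem_weightSpacesAbove {Φ : Finset (Module.Dual ℂ a)}
    (hwtsup : n.toSubmodule = ⨆ α ∈ Φ, wtSpace b a n α) {H₀ : a} {c : ℝ}
    (hc : ∀ α ∈ Φ, c ≤ (α H₀).re) {t : ℝ} {x : b} (hx : x ∈ n) {v : U}
    (hv : v ∈ weightSpacesAbove U H₀ t) : ⁅x, v⁆ ∈ weightSpacesAbove U H₀ (t + c) := by
  have hwt : ∀ α ∈ Φ, ∀ y ∈ wtSpace b a n α,
      weightSpacesAbove U H₀ t ≤ (weightSpacesAbove U H₀ (t + c)).comap (LieModule.toEnd ℂ b U y) :=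
    fun α hα y hy ↦ iSup₂_le fun χ hχ ↦ Submodule.map_le_iff_le_comap.1 <|
      (map_lie_jointGenEigenspace_le hy χ).trans <| jointGenEigenspace_le_weightSpacesAbove <| by
        simpa using add_le_add hχ (hc α hα)
  rw [← LieSubalgebra.mem_toSubmodule, hwtsup] at hx
  obtain ⟨y, rfl⟩ := (Submodule.mem_iSup_finset_iff_exists_sum _ _).1 hx
  rw [sum_lie]
  exact Submodule.sum_mem _ fun α hα ↦ hwt α hα (y α) (y α).2 hv

lemma iSup_jointGenEigenspace_eq_top (hab : IsLieAbelian a) (hafin : ∀ u : U, u ∈ aFinite b a U) :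
    ⨆ χ, jointGenEigenspace (aAction a U) χ = ⊤ := by
  refine eq_top_iff.2 fun u _ ↦ ?_
  obtain ⟨N, huN, hN, hNst⟩ := hafin u
  exact mem_iSup_jointGenEigenspace (aAction_commute hab) (fun H v hv ↦ hNst H v hv) huN

lemma eventually_mem_weightSpacesAbove (hab : IsLieAbelian a)
    (hafin : ∀ u : U, u ∈ aFinite b a U) (H₀ : a) (u : U) :
    ∀ᶠ t in atBot, u ∈ weightSpacesAbove U H₀ t := by
  obtain ⟨s, hs⟩ := Submodule.mem_iSup_iff_exists_finset.1
    ((iSup_jointGenEigenspace_eq_top hab hafin).ge (Submodule.mem_top (x := u)))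
  filter_upwards [(s.eventually_all).2 fun χ _ ↦ eventually_le_atBot (χ H₀).re] with t ht
  exact iSup₂_le (fun χ hχ ↦ jointGenEigenspace_le_weightSpacesAbove (ht χ hχ)) hs

lemma exists_weightSpacesAbove_eq_top (hab : IsLieAbelian a)
    (hafin : ∀ u : U, u ∈ aFinite b a U) (hfg : FGOverN b n U) {Φ : Finset (Module.Dual ℂ a)}
    (hwtsup : n.toSubmodule = ⨆ α ∈ Φ, wtSpace b a n α) {H₀ : a}
    (hΦ : ∀ α ∈ Φ, 0 ≤ (α H₀).re) : ∃ m, weightSpacesAbove U H₀ m = ⊤ := by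
  obtain ⟨S, hS⟩ := hfg
  obtain ⟨m, hm⟩ :=
    ((S.eventually_all).2 fun s _ ↦ eventually_mem_weightSpacesAbove hab hafin H₀ s).exists
  exact ⟨m, hS _ hm fun x hx v hv ↦ by simpa using lie_mem_weightSpacesAbove hwtsup hΦ hx hv⟩

lemma nPowU_le_weightSpacesAbove {Φ : Finset (Module.Dual ℂ a)}
    (hwtsup : n.toSubmodule = ⨆ α ∈ Φ, wtSpace b a n α) {H₀ : a} {c m : ℝ}
    (hc : ∀ α ∈ Φ, c ≤ (α H₀).re) (hm : weightSpacesAbove U H₀ m = ⊤) :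
    ∀ k : ℕ, nPowU b n U k ≤ weightSpacesAbove U H₀ (m + k * c)
  | 0 => by simp [nPowU, hm]
  | k + 1 => Submodule.span_le.2 <| by
      rintro _ ⟨x, hx, u, hu, rfl⟩
      have h := lie_mem_weightSpacesAbove hwtsup hc hx
        (nPowU_le_weightSpacesAbove hwtsup hc hm k hu)
      rwa [Nat.cast_succ, add_one_mul, ← add_assoc]

lemma eventually_disjoint_nPowU (hab : IsLieAbelian a) (hafin : ∀ u : U, u ∈ aFinite b a U)
    (hfg : FGOverN b n U) {Φ : Finset (Module.Dual ℂ a)}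
    (hwtsup : n.toSubmodule = ⨆ α ∈ Φ, wtSpace b a n α) {H₀ : a}
    (hΦ : ∀ α ∈ Φ, 0 < (α H₀).re) (s : Finset (a → ℂ)) :
    ∀ᶠ k in atTop, Disjoint (⨆ χ ∈ s, jointGenEigenspace (aAction a U) χ) (nPowU b n U k) := by
  obtain ⟨c, hc0, hc⟩ : ∃ c : ℝ, 0 < c ∧ ∀ α ∈ Φ, c ≤ (α H₀).re :=
    ((eventually_mem_nhdsWithin (s := Set.Ioi 0) (a := (0 : ℝ))).and <|
      (Φ.eventually_all).2 fun α hα ↦ nhdsWithin_le_nhds (eventually_le_nhds (hΦ α hα))).exists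
  obtain ⟨m, hm⟩ := exists_weightSpacesAbove_eq_top hab hafin hfg hwtsup fun α hα ↦ (hΦ α hα).le
  have hlim : Tendsto (fun k : ℕ ↦ m + k * c) atTop atTop :=
    tendsto_atTop_add_const_left _ _ (tendsto_natCast_atTop_atTop.atTop_mul_const hc0)
  filter_upwards [(s.eventually_all).2 fun χ _ ↦ hlim.eventually_gt_atTop (χ H₀).re] with k hk
  exact (disjoint_weightSpacesAbove hab hk).mono_right
    (nPowU_le_weightSpacesAbove hwtsup hc hm k)

variable [FiniteDimensional ℂ b]

variable (b n U) in
def canULin : U →ₗ[ℂ] limU b n U where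
  toFun := canU b n U
  map_add' _ _ := rfl
  map_smul' _ _ := rfl

lemma canU_injective (hab : IsLieAbelian a) (hafin : ∀ u : U, u ∈ aFinite b a U)
    (hfg : FGOverN b n U) {Φ : Finset (Module.Dual ℂ a)}
    (hwtsup : n.toSubmodule = ⨆ α ∈ Φ, wtSpace b a n α) {H₀ : a}
    (hΦ : ∀ α ∈ Φ, 0 < (α H₀).re) : Injective (canU b n U) := by
  refine (injective_iff_map_eq_zero (canULin b n U)).2 fun u hu ↦ ?_
  obtain ⟨s, hs⟩ := Submodule.mem_iSup_iff_exists_finset.1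
    ((iSup_jointGenEigenspace_eq_top hab hafin).ge (Submodule.mem_top (x := u)))
  obtain ⟨k, hk⟩ := (eventually_disjoint_nPowU hab hafin hfg hwtsup hΦ s).exists
  have huk : u ∈ nPowU b n U k := (Submodule.Quotient.mk_eq_zero _).1 (congr_arg (·.1 k) hu)
  exact (Submodule.mem_bot ℂ).1 (hk.le_bot ⟨hs, huk⟩)

section Quotients

variable (hideal : ∀ x : b, ∀ y ∈ n, ⁅x, y⁆ ∈ n)
include hideal

lemma actQk_comp_mkQ (x : b) (k : ℕ) :
    (actQk b n U hideal x k).comp (nPowU b n U k).mkQ =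
      (nPowU b n U k).mkQ.comp (LieModule.toEnd ℂ b U x) :=
  Submodule.mapQ_mkQ _ _ _

lemma actQk_commute (hab : IsLieAbelian a) (k : ℕ) (H H' : a) :
    Commute (actQk b n U hideal H k) (actQk b n U hideal H' k) :=
  commute_of_comp_eq_of_surjective (Submodule.mkQ_surjective _)
    (fun H : a ↦ actQk_comp_mkQ hideal H k) (aAction_commute hab H H')

lemma map_mkQ_jointGenEigenspace (hab : IsLieAbelian a) (hafin : ∀ u : U, u ∈ aFinite b a U)
    (k : ℕ) (χ : a → ℂ) :
    (jointGenEigenspace (aAction a U) χ).map (nPowU b n U k).mkQ =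
      jointGenEigenspace (fun H : a ↦ actQk b n U hideal H k) χ :=
  map_jointGenEigenspace_eq_of_surjective (Submodule.mkQ_surjective _)
    (fun H : a ↦ actQk_comp_mkQ hideal H k) (aAction_commute hab)
    (iSup_jointGenEigenspace_eq_top hab hafin) χ

end Quotients

variable (b n U) in
def limProj (k : ℕ) : limU b n U →ₗ[ℂ] U ⧸ nPowU b n U k :=
  (LinearMap.proj k).comp (limU b n U).subtype

lemma limProj_mk_of_le (f : limU b n U) {k j : ℕ} (hkj : k ≤ j) {u : U}
    (hu : Submodule.Quotient.mk u = limProj b n U j f) :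
    Submodule.Quotient.mk u = limProj b n U k f := by
  induction j, hkj using Nat.le_induction generalizing u with
  | base => exact hu
  | succ j _ ih =>
    refine ih ?_
    change _ = f.1 (j + 1) at hu
    change _ = f.1 j
    rw [← f.2 j, ← hu]
    rfl

section Limit

variable (hideal : ∀ x : b, ∀ y ∈ n, ⁅x, y⁆ ∈ n)
include hideal

lemma actLim_commute (hab : IsLieAbelian a) (H H' : a) :
    Commute (actLim b a n U hideal H) (actLim b a n U hideal H') :=
  LinearMap.ext fun f ↦ Subtype.ext <| funext fun k ↦
    LinearMap.congr_fun (actQk_commute hideal hab k H H').eq (f.1 k)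

lemma jointGenEigenspace_actLim_le_range (hab : IsLieAbelian a)
    (hafin : ∀ u : U, u ∈ aFinite b a U) (hfg : FGOverN b n U) {Φ : Finset (Module.Dual ℂ a)}
    (hwtsup : n.toSubmodule = ⨆ α ∈ Φ, wtSpace b a n α) {H₀ : a}
    (hΦ : ∀ α ∈ Φ, 0 < (α H₀).re) (χ : a → ℂ) :
    jointGenEigenspace (actLim b a n U hideal) χ ≤ LinearMap.range (canULin b n U) := by
  intro f hf
  have hlift (k : ℕ) :
      ∃ u ∈ jointGenEigenspace (aAction a U) χ, (nPowU b n U k).mkQ u = limProj b n U k f := by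
    rw [← Submodule.mem_map, map_mkQ_jointGenEigenspace hideal hab hafin]
    exact map_jointGenEigenspace_le (f := actLim b a n U hideal)
      (g := fun H : a ↦ actQk b n U hideal H k) (ψ := limProj b n U k)
      (fun H ↦ LinearMap.ext fun _ ↦ rfl) χ ⟨f, hf, rfl⟩
  choose u hu hfu using hlift
  obtain ⟨K, hK⟩ := (eventually_disjoint_nPowU hab hafin hfg hwtsup hΦ {χ}).exists
  refine ⟨u K, Subtype.ext <| funext fun k ↦ ?_⟩
  have hstable : u (max k K) = u K := by
    refine sub_eq_zero.1 <| (Submodule.mem_bot ℂ).1 <| hK.le_bot ⟨?_, ?_⟩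
    · simpa using sub_mem (hu (max k K)) (hu K)
    · rw [SetLike.mem_coe, ← Submodule.Quotient.eq]
      exact (limProj_mk_of_le f (le_max_right k K) (hfu _)).trans (hfu K).symm
  change Submodule.Quotient.mk (u K) = limProj b n U k f
  exact hstable ▸ limProj_mk_of_le f (le_max_left k K) (hfu _)

lemma exists_actLim_stable_finiteDimensional {u : U} (hu : u ∈ aFinite b a U) :
    ∃ N : Submodule ℂ (limU b n U), canU b n U u ∈ N ∧ FiniteDimensional ℂ N ∧
      ∀ H : a, ∀ g ∈ N, actLim b a n U hideal H g ∈ N := by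
  obtain ⟨N, huN, hN, hNst⟩ := hu
  refine ⟨N.map (canULin b n U), ⟨u, huN, rfl⟩, Module.Finite.map N _, ?_⟩
  rintro H _ ⟨v, hv, rfl⟩
  exact ⟨_, hNst H v hv, rfl⟩

end Limit

end Jb

open Jb in
theorem canonical_map_injective_range_aFinite_general
    (b : Type*) [LieRing b] [LieAlgebra ℂ b] [FiniteDimensional ℂ b]
    (a n : LieSubalgebra ℂ b)
    (hab : IsLieAbelian a)
    (hideal : ∀ x : b, ∀ y ∈ n, ⁅x, y⁆ ∈ n)
    (Φ : Finset (Module.Dual ℂ a))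
    (hwtsup : n.toSubmodule = ⨆ α ∈ Φ, wtSpace b a n α)
    (hH₀ : ∃ H : a, ∀ α ∈ Φ, 0 < ((α : Module.Dual ℂ a) H).re)
    (U : Type*) [AddCommGroup U] [Module ℂ U]
    [LieRingModule b U] [LieModule ℂ b U]
    (hfg : FGOverN b n U)
    (hafin : ∀ u : U, u ∈ aFinite b a U) :
    Function.Injective (canU b n U) ∧
    Set.range (canU b n U)
      = {f : limU b n U | ∃ N : Submodule ℂ (limU b n U), f ∈ N ∧
          FiniteDimensional ℂ N ∧
          ∀ H : a, ∀ g ∈ N, actLim b a n U hideal H g ∈ N} := by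
  obtain ⟨H₀, hH₀⟩ := hH₀
  refine ⟨canU_injective hab hafin hfg hwtsup hH₀, Set.Subset.antisymm ?_ ?_⟩
  · rintro _ ⟨u, rfl⟩
    exact exists_actLim_stable_finiteDimensional hideal (hafin u)
  · rintro f ⟨N, hfN, hN, hNst⟩
    have hf : f ∈ ⨆ χ, jointGenEigenspace (actLim b a n U hideal) χ :=
      mem_iSup_jointGenEigenspace (actLim_commute hideal hab) hNst hfN
    exact iSup_le (jointGenEigenspace_actLim_le_range hideal hab hafin hfg hwtsup hH₀) hf

open Jb in
/-- Let `𝔟 = 𝔞 ⊕ 𝔫` be as in the paper and let `U` be a `𝔟`-module,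
finitely generated over `U(𝔫)`, all of whose elements are `𝔞`-finite.  Then the
canonical map `U → lim_k U/𝔫^kU` is injective and its image is exactly the set of
`𝔞`-finite elements of `lim_k U/𝔫^kU`; that is, the Jacquet module `J(U)` (the
`𝔞`-finite part of the completion) equals `U`. -/
theorem canonical_map_injective_range_aFinite
    (b : Type*) [LieRing b] [LieAlgebra ℂ b] [FiniteDimensional ℂ b]
    (a n : LieSubalgebra ℂ b)
    (hab : IsLieAbelian a)
    (hideal : ∀ x : b, ∀ y ∈ n, ⁅x, y⁆ ∈ n)
    (hnilp : LieRing.IsNilpotent n)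
    (hdisj : a.toSubmodule ⊓ n.toSubmodule = ⊥)
    (hsup : a.toSubmodule ⊔ n.toSubmodule = ⊤)
    (Φ : Finset (Module.Dual ℂ a)) (hΦ0 : (0 : Module.Dual ℂ a) ∉ Φ)
    (hwtsup : n.toSubmodule = ⨆ α ∈ Φ, wtSpace b a n α)
    (hwtindep : iSupIndep fun α : Φ => wtSpace b a n α)
    (hH₀ : ∃ H : a, ∀ α ∈ Φ, 0 < ((α : Module.Dual ℂ a) H).re)
    (U : Type*) [AddCommGroup U] [Module ℂ U]
    [LieRingModule b U] [LieModule ℂ b U]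
    (hfg : FGOverN b n U)
    (hafin : ∀ u : U, u ∈ aFinite b a U) :
    Function.Injective (canU b n U) ∧
    Set.range (canU b n U)
      = {f : limU b n U | ∃ N : Submodule ℂ (limU b n U), f ∈ N ∧
          FiniteDimensional ℂ N ∧
          ∀ H : a, ∀ g ∈ N, actLim b a n U hideal H g ∈ N} :=
  canonical_map_injective_range_aFinite_general b a n hab hideal Φ hwtsup hH₀ U hfg hafin
end

section
/- Let r ≥ 1, λ ∈ ℂ, and Q₀, R ∈ M_r(ℂ) with Q₀ upper triangular. Then there exist matrices L, T ∈ M_r(ℂ) such that λL − (Q₀L − LQ₀) = T + R, and T_{ij} = 0 whenever (Q₀)_{ii} − (Q₀)_{jj} ≠ λ. -/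
/-!
Write `c i j = λ - (Q₀)ᵢᵢ + (Q₀)ⱼⱼ`. Since `Q₀` is upper triangular, the `(i, j)` entry of
`λL - [Q₀, L]` is `c i j * Lᵢⱼ - ∑_{k > i} (Q₀)ᵢₖ Lₖⱼ + ∑_{k < j} Lᵢₖ (Q₀)ₖⱼ`, which involves,
besides `Lᵢⱼ`, only entries below `(i, j)` in its column or to its left in its row. So the
entries of `L` can be solved for recursively, making the `(i, j)` entry equal to `Rᵢⱼ` whenever
`c i j ≠ 0`; `T` is then whatever remains, supported where `c i j = 0`.
-/

open Finset

namespace Matrix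

variable {ι K : Type*} [LinearOrder ι]

theorem blockTriangular_id_mul_apply [Fintype ι] [LocallyFiniteOrderTop ι]
    {R : Type*} [NonUnitalNonAssocSemiring R] {Q : Matrix ι ι R} (hQ : Q.BlockTriangular id)
    (L : Matrix ι ι R) (i j : ι) :
    (Q * L) i j = Q i i * L i j + ∑ k ∈ Ioi i, Q i k * L k j := by
  rw [mul_apply, ← sum_subset (subset_univ (Ici i)), Ici_eq_cons_Ioi, sum_cons]
  intro k _ hk
  rw [hQ (not_le.mp (by simpa using hk)), zero_mul]

theorem mul_blockTriangular_id_apply [Fintype ι] [LocallyFiniteOrderBot ι]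
    {R : Type*} [NonUnitalNonAssocSemiring R] {Q : Matrix ι ι R} (hQ : Q.BlockTriangular id)
    (L : Matrix ι ι R) (i j : ι) :
    (L * Q) i j = L i j * Q j j + ∑ k ∈ Iio j, L i k * Q k j := by
  rw [mul_apply, ← sum_subset (subset_univ (Iic j)), Iic_eq_cons_Iio, sum_cons]
  intro k _ hk
  rw [hQ (not_le.mp (by simpa using hk)), mul_zero]

variable [LocallyFiniteOrderBot ι] [LocallyFiniteOrderTop ι] [Field K]

theorem smul_sub_commutator_apply_of_blockTriangular_id [Fintype ι] (lam : K)
    {Q : Matrix ι ι K} (hQ : Q.BlockTriangular id) (L : Matrix ι ι K) (i j : ι) :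
    (lam • L - (Q * L - L * Q)) i j =
      (lam - Q i i + Q j j) * L i j - ∑ k ∈ Ioi i, Q i k * L k j
        + ∑ k ∈ Iio j, L i k * Q k j := by
  rw [sub_apply, sub_apply, smul_apply, smul_eq_mul, blockTriangular_id_mul_apply hQ,
    mul_blockTriangular_id_apply hQ]
  ring

open scoped Classical in
noncomputable def sylvesterSolution (lam : K) (Q R : Matrix ι ι K) : Matrix ι ι K :=
  fun i j =>
    if lam - Q i i + Q j j = 0 then 0 else
      (R i j + ∑ k ∈ (Ioi i).attach, Q i k * sylvesterSolution lam Q R k j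
        - ∑ k ∈ (Iio j).attach, sylvesterSolution lam Q R i k * Q k j) / (lam - Q i i + Q j j)
termination_by i j => #(Iio j) + #(Ioi i)
decreasing_by
  · have := card_lt_card (Ioi_ssubset_Ioi (mem_Ioi.mp k.2)); omega
  · have := card_lt_card (Iio_ssubset_Iio (mem_Iio.mp k.2)); omega

theorem mul_sylvesterSolution_apply (lam : K) (Q R : Matrix ι ι K) {i j : ι}
    (h : lam - Q i i + Q j j ≠ 0) :
    (lam - Q i i + Q j j) * sylvesterSolution lam Q R i j =
      R i j + ∑ k ∈ Ioi i, Q i k * sylvesterSolution lam Q R k j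
        - ∑ k ∈ Iio j, sylvesterSolution lam Q R i k * Q k j := by
  rw [sylvesterSolution, if_neg h, mul_div_cancel₀ _ h,
    sum_attach (Ioi i) (fun k => Q i k * sylvesterSolution lam Q R k j),
    sum_attach (Iio j) (fun k => sylvesterSolution lam Q R i k * Q k j)]

theorem smul_sub_commutator_sylvesterSolution_apply [Fintype ι] (lam : K) {Q : Matrix ι ι K}
    (hQ : Q.BlockTriangular id) (R : Matrix ι ι K) {i j : ι} (h : lam - Q i i + Q j j ≠ 0) :
    (lam • sylvesterSolution lam Q R - (Q * sylvesterSolution lam Q R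
      - sylvesterSolution lam Q R * Q)) i j = R i j := by
  rw [smul_sub_commutator_apply_of_blockTriangular_id lam hQ, mul_sylvesterSolution_apply lam Q R h]
  ring

end Matrix

theorem exists_L_T_of_upper_triangular_general
    (r : ℕ) (lam : ℂ) (Q₀ R : Matrix (Fin r) (Fin r) ℂ)
    (hQ₀ : ∀ i j : Fin r, j < i → Q₀ i j = 0) :
    ∃ L T : Matrix (Fin r) (Fin r) ℂ,
      lam • L - (Q₀ * L - L * Q₀) = T + R ∧
      ∀ i j : Fin r, Q₀ i i - Q₀ j j ≠ lam → T i j = 0 := by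
  set L := Matrix.sylvesterSolution lam Q₀ R
  refine ⟨L, lam • L - (Q₀ * L - L * Q₀) - R, (sub_add_cancel _ _).symm, fun i j hij => ?_⟩
  have hc : lam - Q₀ i i + Q₀ j j ≠ 0 := fun h => hij (by linear_combination -h)
  rw [Matrix.sub_apply, sub_eq_zero]
  exact Matrix.smul_sub_commutator_sylvesterSolution_apply lam (fun i j => hQ₀ i j) R hc

/-- Let `r ≥ 1`, `λ ∈ ℂ`, and `Q₀, R ∈ M_r(ℂ)` with `Q₀` upper
triangular.  Then there exist matrices `L, T ∈ M_r(ℂ)` such that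
`λ·L − (Q₀L − LQ₀) = T + R`, and `T i j = 0` whenever `(Q₀)ᵢᵢ − (Q₀)ⱼⱼ ≠ λ`. -/
theorem exists_L_T_of_upper_triangular
    (r : ℕ) (hr : 1 ≤ r) (lam : ℂ) (Q₀ R : Matrix (Fin r) (Fin r) ℂ)
    (hQ₀ : ∀ i j : Fin r, j < i → Q₀ i j = 0) :
    ∃ L T : Matrix (Fin r) (Fin r) ℂ,
      lam • L - (Q₀ * L - L * Q₀) = T + R ∧
      ∀ i j : Fin r, Q₀ i i - Q₀ j j ≠ lam → T i j = 0 :=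
  exists_L_T_of_upper_triangular_general r lam Q₀ R hQ₀
end

section
/- R is a Noetherian ring. -/
open MvPolynomial

variable (m : ℕ) {A : Type*} [AddCommGroup A] (w : Fin m → A) (Λ : AddSubgroup A)

/-- The subalgebra `R` of `R' = ℂ[x_1, …, x_m]` spanned (as a `ℂ`-subspace) by the
monomials `x^d` whose weight `Σ_i d_i · w(i)` lies in `Λ`. -/
noncomputable def weightedSubalgebra : Subalgebra ℂ (MvPolynomial (Fin m) ℂ) where
  carrier := (Submodule.span ℂ
    {p : MvPolynomial (Fin m) ℂ | ∃ d : Fin m →₀ ℕ, (∑ i, d i • w i) ∈ Λ ∧ p = monomial d (1 : ℂ)} : Set _)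
  zero_mem' := Submodule.zero_mem _
  add_mem' := fun h₁ h₂ => Submodule.add_mem _ h₁ h₂
  one_mem' := by
    refine Submodule.subset_span ⟨0, ?_, ?_⟩
    · simpa using Λ.zero_mem
    · simp
  mul_mem' := by
    intro p q hp hq
    induction hp, hq using Submodule.span_induction₂ with
    | mem_mem x y hx hy =>
        obtain ⟨d, hd, rfl⟩ := hx
        obtain ⟨e, he, rfl⟩ := hy
        refine Submodule.subset_span ⟨d + e, ?_, ?_⟩
        · simpa [Finsupp.add_apply, add_smul, Finset.sum_add_distrib] using Λ.add_mem hd he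
        · simp [MvPolynomial.monomial_mul]
    | zero_left y hy => simpa using Submodule.zero_mem _
    | zero_right x hx => simpa using Submodule.zero_mem _
    | add_left x y z hx hy hz h1 h2 => rw [add_mul]; exact Submodule.add_mem _ h1 h2
    | add_right x y z hx hy hz h1 h2 => rw [mul_add]; exact Submodule.add_mem _ h1 h2
    | smul_left r x y hx hy h => rw [smul_mul_assoc]; exact Submodule.smul_mem _ _ h
    | smul_right r x y hx hy h => rw [mul_smul_comm]; exact Submodule.smul_mem _ _ h
  algebraMap_mem' := fun c => by
    have : (algebraMap ℂ (MvPolynomial (Fin m) ℂ)) c = c • monomial 0 1 := by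
      simp [Algebra.smul_def]
    rw [this]
    refine Submodule.smul_mem _ _ (Submodule.subset_span ⟨0, ?_, rfl⟩)
    simpa using Λ.zero_mem

/-!
Monomials of weight in `Λ` form a monoid, and any such `x^d` with some `d_i ≥ 3` factors as
`x^(d - 2e_i) · x_i^2`, where both factors again have weight in `Λ` because `2·w(i) ∈ Λ`.
Hence `R` is generated as a `ℂ`-algebra by the finitely many monomials of weight in `Λ` with
all exponents at most `2`, and Hilbert's basis theorem makes it Noetherian.
-/

section Weight

variable {A σ : Type*} [AddCommGroup A] [Fintype σ] (w : σ → A) (Λ : AddSubgroup A)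

theorem sum_smul_single (i : σ) (n : ℕ) : ∑ j, Finsupp.single i n j • w j = n • w i := by
  rw [Finset.sum_eq_single i] <;> simp_all

theorem sum_smul_add_single (d : σ →₀ ℕ) (i : σ) (n : ℕ) :
    ∑ j, (d + Finsupp.single i n) j • w j = ∑ j, d j • w j + n • w i := by
  simp only [Finsupp.add_apply, add_smul, Finset.sum_add_distrib, sum_smul_single]

theorem Finsupp.finite_setOf_forall_le (n : ℕ) : {d : σ →₀ ℕ | ∀ i, d i ≤ n}.Finite := by
  classical
  exact (Set.finite_Iic (Finsupp.equivFunOnFinite.symm fun _ => n)).subset fun d hd => by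
    simpa [Finsupp.le_def] using hd

def smallExponents : Set (σ →₀ ℕ) := {d | (∀ i, d i ≤ 2) ∧ ∑ i, d i • w i ∈ Λ}

theorem smallExponents_finite : (smallExponents w Λ).Finite :=
  (Finsupp.finite_setOf_forall_le 2).subset fun _ hd => hd.1

variable {w Λ} {R : Type*} [CommSemiring R]

theorem monomial_mem_adjoin_smallExponents (hΛ : ∀ i, 2 • w i ∈ Λ) (d : σ →₀ ℕ)
    (hd : ∑ i, d i • w i ∈ Λ) :
    monomial d (1 : R) ∈ Algebra.adjoin R ((monomial · 1) '' smallExponents w Λ) := by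
  induction d using WellFoundedLT.induction with
  | _ d ih =>
  by_cases hsmall : ∀ i, d i ≤ 2
  · exact Algebra.subset_adjoin ⟨d, ⟨hsmall, hd⟩, rfl⟩
  push Not at hsmall
  obtain ⟨i, hi⟩ := hsmall
  obtain ⟨e, rfl⟩ : ∃ e, d = e + Finsupp.single i 2 :=
    ⟨d - Finsupp.single i 2, (tsub_add_cancel_of_le (Finsupp.single_le_iff.mpr hi.le)).symm⟩
  rw [sum_smul_add_single] at hd
  have he : ∑ j, e j • w j ∈ Λ := by simpa using Λ.sub_mem hd (hΛ i)
  have hsq : monomial (Finsupp.single i 2) (1 : R) ∈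
      Algebra.adjoin R ((monomial · 1) '' smallExponents w Λ) := by
    classical
    refine Algebra.subset_adjoin ⟨Finsupp.single i 2, ⟨fun j => ?_, ?_⟩, rfl⟩
    · by_cases hij : i = j <;> simp [hij]
    · rw [sum_smul_single]; exact hΛ i
  have hlt : e < e + Finsupp.single i 2 := lt_add_of_pos_right _ (pos_iff_ne_zero.mpr (by simp))
  simpa only [monomial_mul, one_mul] using mul_mem (ih e hlt he) hsq

end Weight

theorem weightedSubalgebra_eq_adjoin (hΛ : ∀ i, 2 • w i ∈ Λ) :
    weightedSubalgebra m w Λ = Algebra.adjoin ℂ ((monomial · 1) '' smallExponents w Λ) := by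
  apply le_antisymm
  · intro p hp
    refine (Submodule.span_le (p := Subalgebra.toSubmodule (Algebra.adjoin ℂ _))).mpr ?_ hp
    rintro _ ⟨d, hd, rfl⟩
    exact monomial_mem_adjoin_smallExponents hΛ d hd
  · rw [Algebra.adjoin_le_iff]
    rintro _ ⟨d, hd, rfl⟩
    exact Submodule.subset_span ⟨d, hd.2, rfl⟩

theorem weightedSubalgebra_isNoetherianRing_general
    (m : ℕ) {A : Type*} [AddCommGroup A] (w : Fin m → A)
    (Λ : AddSubgroup A) (hΛ : ∀ i : Fin m, 2 • w i ∈ Λ) :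
    IsNoetherianRing (weightedSubalgebra m w Λ) :=
  isNoetherianRing_of_fg <| Subalgebra.fg_def.mpr
    ⟨_, (smallExponents_finite w Λ).image _, (weightedSubalgebra_eq_adjoin m w Λ hΛ).symm⟩

/-- Let `Λ` be a subgroup of an abelian group `A` and
`w : {1,…,m} → A` a weight function with `2·w(i) ∈ Λ` for all `i`.  Then the
subalgebra `R` of `R' = ℂ[x_1,…,x_m]` spanned by the monomials of weight in `Λ`
is a Noetherian ring. -/
theorem weightedSubalgebra_isNoetherianRing
    (m : ℕ) (hm : 1 ≤ m) {A : Type*} [AddCommGroup A] (w : Fin m → A)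
    (Λ : AddSubgroup A) (hΛ : ∀ i : Fin m, 2 • w i ∈ Λ) :
    IsNoetherianRing (weightedSubalgebra m w Λ) :=
  weightedSubalgebra_isNoetherianRing_general m w Λ hΛ
end
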